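/- For every finite simple graph G on vertices {1,…,n} with ordered edge set E, one has f_q(1/2) = f_vect(1/2). -/

import Mathlib

open scoped BigOperators

/-- A correlation with `n` inputs and `2` outputs: `p i j v w` is `p(i,j|v,w)`. -/
abbrev Corr (n : ℕ) := Fin 2 → Fin 2 → Fin n → Fin n → ℝ

/-- Synchronous correlation (for two outputs). -/
def IsSync {n : ℕ} (p : Corr n) : Prop :=
  ∀ v, p 0 1 v v = 0 ∧ p 1 0 v v = 0

/-- Both marginals of outcome `0` are constantly equal to `t`. -/
def HasMarginals {n : ℕ} (p : Corr n) (t : ℝ) : Prop :=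
  (∀ v w, ∑ j, p 0 j v w = t) ∧ (∀ v w, ∑ i, p i 0 v w = t)

/-- The (ordered) edge set of a graph `G` on `Fin n`, as a finset of ordered pairs. -/
def edgeFinset' {n : ℕ} (G : SimpleGraph (Fin n)) [DecidableRel G.Adj] :
    Finset (Fin n × Fin n) :=
  Finset.univ.filter fun vw : Fin n × Fin n => G.Adj vw.1 vw.2

/-- `F(p) = Σ_{(v,w) ∈ E} p(0,0|v,w)`. -/
def Fval {n : ℕ} (G : SimpleGraph (Fin n)) [DecidableRel G.Adj] (p : Corr n) : ℝ :=
  ∑ vw ∈ edgeFinset' G, p 0 0 vw.1 vw.2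

/-- A realization of `p` as a vectorial correlation, in a real Hilbert space. -/
structure VectRealization (n : ℕ) (p : Corr n) where
  H : Type
  [nacg : NormedAddCommGroup H]
  [ips : InnerProductSpace ℝ H]
  x : Fin n → Fin 2 → H
  y : Fin n → Fin 2 → H
  h : H
  hnorm : ‖h‖ = 1
  hxorth : ∀ v, inner ℝ (x v 0) (x v 1) = (0 : ℝ)
  hyorth : ∀ w, inner ℝ (y w 0) (y w 1) = (0 : ℝ)
  hxsum : ∀ v, x v 0 + x v 1 = h
  hysum : ∀ w, y w 0 + y w 1 = h
  hval : ∀ i j v w, p i j v w = inner ℝ (x v i) (y w j)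
  hnn : ∀ i j v w, 0 ≤ p i j v w

/-- `p` is a vectorial correlation. -/
def IsVect {n : ℕ} (p : Corr n) : Prop := Nonempty (VectRealization n p)

/-- `f_vect(t)` for the graph `G`: the infimum of `F(p)` over synchronous vectorial
correlations `p` whose marginals of outcome `0` are constantly equal to `t`. -/
noncomputable def fvect {n : ℕ} (G : SimpleGraph (Fin n)) [DecidableRel G.Adj] (t : ℝ) : ℝ :=
  sInf {s | ∃ p : Corr n, IsVect p ∧ IsSync p ∧ HasMarginals p t ∧ s = Fval G p}

open scoped ComplexOrder

/-- A projection matrix: self-adjoint idempotent. -/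
def IsProjMat {d : ℕ} (P : Matrix (Fin d) (Fin d) ℂ) : Prop :=
  P.IsHermitian ∧ P * P = P

/-- `f_q(t)` for the graph `G`: the infimum of `Σ_{(v,w)∈E} Tr(ρ P_v P_w)` over all `d ≥ 1`,
projections `P₁,…,Pₙ ∈ M_d(ℂ)` and positive semidefinite `ρ ∈ M_d(ℂ)` with `Tr(ρ) = 1`,
`ρ P_v = P_v ρ` and `Tr(ρ P_v) = t` for all `v`. -/
noncomputable def fq {n : ℕ} (G : SimpleGraph (Fin n)) [DecidableRel G.Adj] (t : ℝ) : ℝ :=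
  sInf {s | ∃ (d : ℕ), 1 ≤ d ∧
    ∃ (P : Fin n → Matrix (Fin d) (Fin d) ℂ) (ρ : Matrix (Fin d) (Fin d) ℂ),
      (∀ v, IsProjMat (P v)) ∧ ρ.PosSemidef ∧ ρ.trace = 1 ∧
      (∀ v, ρ * P v = P v * ρ) ∧ (∀ v, (ρ * P v).trace = (t : ℂ)) ∧
      (s : ℂ) = ∑ vw ∈ edgeFinset' G, (ρ * P vw.1 * P vw.2).trace}

/-! Given projections `P v` and a state `ρ` commuting with them, the vectors `P v * √ρ`,
`(1 - P v) * √ρ` and `√ρ` in Hilbert–Schmidt space realise `Re Tr(ρ Qᵢ Qⱼ)` (with `Q₀ = P`,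
`Q₁ = 1 - P`) as a synchronous vectorial correlation with the same objective value; its entries
are nonnegative because `Tr(ρ P Q) = Tr((PQ)ᴴ ρ (PQ))` when `ρ` commutes with `P`.

Conversely, in a synchronous vectorial correlation with marginals `1/2` one has `x v 0 = y v 0`,
so `u v = 2 • x v 0 - h` are unit vectors with `p(0,0|v,w) = (1 + ⟪u v, u w⟫) / 4`. Writing their
Gram matrix as `Bᴴ B`, the columns `b v` of `B` give Clifford elements `A v = ∑ᵢ b v i • γᵢ` with
`(A v)² = 1`, and the projections `(1 + A v) / 2` with the maximally mixed state reproduce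
`(1 + ⟪b v, b w⟫) / 4`. So the two infima are taken over the same set of values. -/

open Matrix Finset
open scoped InnerProductSpace MatrixOrder

lemma Fintype.sum_sum_eq_sum_of_add_eq_zero {ι M : Type*} [Fintype ι] [DecidableEq ι]
    [AddCommMonoid M] (f : ι → ι → M) (hf : ∀ i j, i ≠ j → f i j + f j i = 0) :
    ∑ i, ∑ j, f i j = ∑ i, f i i := by
  have hoff : ∑ q ∈ (univ : Finset ι).offDiag, f q.1 q.2 = 0 :=
    sum_involution (fun q _ => q.swap) (fun q hq => hf _ _ (mem_offDiag.1 hq).2.2)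
      (fun q hq _ h => (mem_offDiag.1 hq).2.2 (congrArg Prod.snd h))
      (fun q hq => by simpa [and_comm, eq_comm] using hq) (fun q _ => rfl)
  rw [← Fintype.sum_prod_type', ← univ_product_univ, ← diag_union_offDiag,
    sum_union (disjoint_diag_offDiag _), hoff, add_zero, sum_diag]

section BinaryPVM

variable {A : Type*} [Ring A]

def binaryPVM (P : A) : Fin 2 → A := ![P, 1 - P]

lemma binaryPVM_zero_add_one (P : A) : binaryPVM P 0 + binaryPVM P 1 = 1 :=
  add_sub_cancel P 1

lemma isStarProjection_binaryPVM [StarRing A] {P : A} (hP : IsStarProjection P) (i : Fin 2) :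
    IsStarProjection (binaryPVM P i) := by
  fin_cases i
  exacts [hP, hP.one_sub]

lemma commute_binaryPVM {ρ P : A} (h : Commute ρ P) (i : Fin 2) :
    Commute ρ (binaryPVM P i) := by
  fin_cases i
  exacts [h, (Commute.one_right ρ).sub_right h]

end BinaryPVM

lemma isStarProjection_half_smul_one_add {A : Type*} [Ring A] [StarRing A] [Algebra ℂ A]
    [StarModule ℂ A] {u : A} (hu : IsSelfAdjoint u) (hu2 : u * u = 1) :
    IsStarProjection ((2⁻¹ : ℂ) • (1 + u)) where
  isIdempotentElem := by
    have h : (1 + u) * (1 + u) = (2 : ℂ) • (1 + u) := by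
      rw [add_mul, one_mul, mul_add, mul_one, hu2, two_smul]
      abel
    rw [IsIdempotentElem, smul_mul_smul_comm, h, smul_smul]
    norm_num
  isSelfAdjoint := by
    rw [IsSelfAdjoint, star_smul, star_add, star_one, hu.star_eq]
    simp

lemma Complex.ofReal_dotProduct {ι : Type*} [Fintype ι] (b c : ι → ℝ) :
    ((b ⬝ᵥ c : ℝ) : ℂ) = (Complex.ofReal ∘ b) ⬝ᵥ (Complex.ofReal ∘ c) := by
  simp [dotProduct]

lemma Matrix.trace_reindex {m n R : Type*} [Fintype m] [Fintype n] [AddCommMonoid R] (e : m ≃ n)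
    (M : Matrix m m R) : (reindex e e M).trace = M.trace :=
  e.symm.sum_comp fun i => M i i

lemma Matrix.PosSemidef.exists_eq_star_dotProduct {n 𝕜 : Type*} [Fintype n] [DecidableEq n]
    [RCLike 𝕜] {C : Matrix n n 𝕜} (hC : C.PosSemidef) :
    ∃ b : n → n → 𝕜, ∀ v w, C v w = star (b v) ⬝ᵥ b w := by
  have hσ : (CFC.sqrt C).IsHermitian := (nonneg_iff_posSemidef.mp (CFC.sqrt_nonneg C)).isHermitian
  refine ⟨fun v i => CFC.sqrt C i v, fun v w => ?_⟩
  conv_lhs => rw [← CFC.sqrt_mul_sqrt_self C hC.nonneg]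
  rw [mul_apply, dotProduct]
  exact sum_congr rfl fun i _ => by simp only [Pi.star_apply, hσ.apply]

section Frobenius

variable {m n 𝕜 : Type*} [RCLike 𝕜]

def toFrobenius (M : Matrix m n 𝕜) : EuclideanSpace 𝕜 (m × n) :=
  WithLp.toLp 2 fun ij => M ij.1 ij.2

lemma toFrobenius_add (A B : Matrix m n 𝕜) :
    toFrobenius (A + B) = toFrobenius A + toFrobenius B := rfl

variable [Fintype m] [Fintype n]

lemma inner_toFrobenius (A B : Matrix m n 𝕜) :
    ⟪toFrobenius A, toFrobenius B⟫_𝕜 = (Aᴴ * B).trace := by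
  simp only [EuclideanSpace.inner_eq_star_dotProduct, toFrobenius, dotProduct, trace, diag_apply,
    mul_apply, conjTranspose_apply, Fintype.sum_prod_type, Pi.star_apply]
  rw [sum_comm]
  exact sum_congr rfl fun _ _ => sum_congr rfl fun _ _ => mul_comm _ _

end Frobenius

section QuantumToVectorial

variable {m : Type} [Fintype m]

lemma trace_mul_mul_nonneg_of_commute {ρ P Q : Matrix m m ℂ} (hρ : ρ.PosSemidef)
    (hP : IsStarProjection P) (hQ : IsStarProjection Q) (hρP : Commute ρ P) :
    0 ≤ (ρ * P * Q).trace := by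
  have hPQ : (P * Q)ᴴ = Q * P := by
    rw [conjTranspose_mul, ← star_eq_conjTranspose, ← star_eq_conjTranspose,
      hP.isSelfAdjoint.star_eq, hQ.isSelfAdjoint.star_eq]
  have h : (ρ * P * Q).trace = ((P * Q)ᴴ * ρ * (P * Q)).trace := by
    calc (ρ * P * Q).trace = (P * ρ * P * Q * Q).trace := by
          rw [mul_assoc _ Q Q, hQ.isIdempotentElem.eq, ← hρP.eq, mul_assoc ρ P P,
            hP.isIdempotentElem.eq]
      _ = (Q * (P * ρ * P * Q)).trace := trace_mul_comm _ _
      _ = ((P * Q)ᴴ * ρ * (P * Q)).trace := by rw [hPQ]; simp only [mul_assoc]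
  rw [h]
  exact (hρ.conjTranspose_mul_mul_same _).trace_nonneg

variable [DecidableEq m]

lemma inner_toFrobenius_mul_sqrt {ρ : Matrix m m ℂ} (hρ : ρ.PosSemidef) (A B : Matrix m m ℂ) :
    ⟪toFrobenius (A * CFC.sqrt ρ), toFrobenius (B * CFC.sqrt ρ)⟫_ℂ = (ρ * Aᴴ * B).trace := by
  have hσ : (CFC.sqrt ρ)ᴴ = CFC.sqrt ρ :=
    (nonneg_iff_posSemidef.mp (CFC.sqrt_nonneg ρ)).isHermitian
  rw [inner_toFrobenius, conjTranspose_mul, hσ, ← mul_assoc, trace_mul_comm, ← mul_assoc,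
    ← mul_assoc, CFC.sqrt_mul_sqrt_self ρ hρ.nonneg]

def quantumCorr {n : ℕ} (ρ : Matrix m m ℂ) (P : Fin n → Matrix m m ℂ) : Corr n :=
  fun i j v w => (ρ * binaryPVM (P v) i * binaryPVM (P w) j).trace.re

variable {n : ℕ} {ρ : Matrix m m ℂ} {P : Fin n → Matrix m m ℂ}

lemma isSync_quantumCorr (hP : ∀ v, IsStarProjection (P v)) : IsSync (quantumCorr ρ P) := by
  intro v
  change (ρ * P v * (1 - P v)).trace.re = 0 ∧ (ρ * (1 - P v) * P v).trace.re = 0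
  rw [mul_assoc, (hP v).mul_one_sub_self, mul_assoc, (hP v).one_sub_mul_self]
  simp

lemma hasMarginals_quantumCorr {t : ℝ} (hmarg : ∀ v, (ρ * P v).trace = t) :
    HasMarginals (quantumCorr ρ P) t := by
  constructor <;> intro v w
  · rw [Fin.sum_univ_two, quantumCorr, quantumCorr, ← Complex.add_re, ← trace_add, ← mul_add,
      binaryPVM_zero_add_one, mul_one]
    simp [binaryPVM, hmarg]
  · rw [Fin.sum_univ_two, quantumCorr, quantumCorr, ← Complex.add_re, ← trace_add, ← add_mul,
      ← mul_add, binaryPVM_zero_add_one, mul_one]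
    simp [binaryPVM, hmarg]

lemma fval_quantumCorr (G : SimpleGraph (Fin n)) [DecidableRel G.Adj] :
    Fval G (quantumCorr ρ P) = (∑ vw ∈ edgeFinset' G, (ρ * P vw.1 * P vw.2).trace).re := by
  rw [Fval, Complex.re_sum]
  rfl

lemma isVect_quantumCorr (hP : ∀ v, IsStarProjection (P v)) (hρ : ρ.PosSemidef)
    (htr : ρ.trace = 1) (hc : ∀ v, Commute ρ (P v)) : IsVect (quantumCorr ρ P) := by
  set x : Fin n → Fin 2 → EuclideanSpace ℂ (m × m) :=
    fun v i => toFrobenius (binaryPVM (P v) i * CFC.sqrt ρ)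
  have hx : ∀ i j v w, (⟪x v i, x w j⟫_ℂ).re = quantumCorr ρ P i j v w := by
    intro i j v w
    rw [inner_toFrobenius_mul_sqrt hρ,
      ← star_eq_conjTranspose, (isStarProjection_binaryPVM (hP v) i).isSelfAdjoint.star_eq]
    rfl
  have hsum : ∀ v, x v 0 + x v 1 = toFrobenius (CFC.sqrt ρ) := fun v => by
    rw [← toFrobenius_add, ← add_mul, binaryPVM_zero_add_one, one_mul]
  have hnn : ∀ i j v w, 0 ≤ quantumCorr ρ P i j v w := fun i j v w =>
    (Complex.nonneg_iff.mp (trace_mul_mul_nonneg_of_commute hρ (isStarProjection_binaryPVM (hP v) i)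
      (isStarProjection_binaryPVM (hP w) j) (commute_binaryPVM (hc v) i))).1
  refine ⟨{
    H := EuclideanSpace ℂ (m × m)
    -- the real part of the complex inner product, so that `hval` holds by definition
    ips := InnerProductSpace.rclikeToReal ℂ _
    x := x
    y := x
    h := toFrobenius (CFC.sqrt ρ)
    hnorm := ?_
    hxorth := ?_
    hyorth := ?_
    hxsum := hsum
    hysum := hsum
    hval := fun i j v w => (hx i j v w).symm
    hnn := hnn }⟩
  · rw [norm_eq_sqrt_re_inner (𝕜 := ℂ), ← one_mul (CFC.sqrt ρ), inner_toFrobenius_mul_sqrt hρ]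
    simp [htr]
  all_goals exact fun v => (hx 0 1 v v).trans (isSync_quantumCorr hP v).1

end QuantumToVectorial

section

attribute [local instance] VectRealization.nacg VectRealization.ips

namespace VectRealization

variable {n : ℕ} {p : Corr n} (R : VectRealization n p) {t : ℝ}

lemma inner_x_zero_h (hm : HasMarginals p t) (v : Fin n) : ⟪R.x v 0, R.h⟫_ℝ = t := by
  rw [← hm.1 v v, Fin.sum_univ_two, R.hval, R.hval, ← inner_add_right, R.hysum]

lemma inner_h_y_zero (hm : HasMarginals p t) (w : Fin n) : ⟪R.h, R.y w 0⟫_ℝ = t := by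
  rw [← hm.2 w w, Fin.sum_univ_two, R.hval, R.hval, ← inner_add_left, R.hxsum]

lemma inner_x_zero_self (v : Fin n) : ⟪R.x v 0, R.x v 0⟫_ℝ = ⟪R.x v 0, R.h⟫_ℝ := by
  rw [← R.hxsum v, inner_add_right, R.hxorth, add_zero]

lemma inner_y_zero_self (w : Fin n) : ⟪R.y w 0, R.y w 0⟫_ℝ = ⟪R.h, R.y w 0⟫_ℝ := by
  rw [← R.hysum w, inner_add_left, real_inner_comm (R.y w 0) (R.y w 1), R.hyorth, add_zero]

lemma x_zero_eq_y_zero (hs : IsSync p) (hm : HasMarginals p t) (v : Fin n) :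
    R.x v 0 = R.y v 0 := by
  have hxy : ⟪R.x v 0, R.y v 0⟫_ℝ = t := by
    rw [← R.inner_x_zero_h hm v, ← R.hysum v, inner_add_right, ← R.hval 0 1, (hs v).1, add_zero]
  rw [← sub_eq_zero, ← inner_self_eq_zero (𝕜 := ℝ), inner_sub_sub_self, inner_x_zero_self,
    inner_y_zero_self, real_inner_comm (R.x v 0), hxy, R.inner_x_zero_h hm, R.inner_h_y_zero hm]
  ring

end VectRealization

lemma IsVect.exists_posSemidef {n : ℕ} {p : Corr n} (hv : IsVect p) (hs : IsSync p)
    (hm : HasMarginals p (1 / 2)) :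
    ∃ C : Matrix (Fin n) (Fin n) ℝ, C.PosSemidef ∧ (∀ v, C v v = 1) ∧
      ∀ v w, p 0 0 v w = (1 + C v w) / 4 := by
  obtain ⟨R⟩ := hv
  set u : Fin n → R.H := fun v => (2 : ℝ) • R.x v 0 - R.h
  have hu : ∀ v w, ⟪u v, u w⟫_ℝ = 4 * p 0 0 v w - 1 := by
    intro v w
    have hh : ⟪R.h, R.h⟫_ℝ = 1 := by rw [real_inner_self_eq_norm_sq, R.hnorm, one_pow]
    have hxh : ∀ v, ⟪R.h, R.x v 0⟫_ℝ = 1 / 2 := fun v => by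
      rw [real_inner_comm, R.inner_x_zero_h hm]
    simp only [u, inner_sub_left, inner_sub_right, real_inner_smul_left, real_inner_smul_right,
      R.hval, ← R.x_zero_eq_y_zero hs hm, R.inner_x_zero_h hm, hxh, hh]
    ring
  refine ⟨gram ℝ u, posSemidef_gram ℝ u, fun v => ?_, fun v w => ?_⟩
  · rw [gram_apply, hu, R.hval, ← R.x_zero_eq_y_zero hs hm, R.inner_x_zero_self,
      R.inner_x_zero_h hm]
    norm_num
  · rw [gram_apply, hu]
    ring

lemma IsVect.exists_unit_vectors {n : ℕ} {p : Corr n} (hv : IsVect p) (hs : IsSync p)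
    (hm : HasMarginals p (1 / 2)) :
    ∃ b : Fin n → Fin n → ℝ, (∀ v, b v ⬝ᵥ b v = 1) ∧ ∀ v w, p 0 0 v w = (1 + b v ⬝ᵥ b w) / 4 := by
  obtain ⟨C, hC, hdiag, hp⟩ := hv.exists_posSemidef hs hm
  obtain ⟨b, hb⟩ := hC.exists_eq_star_dotProduct
  simp only [star_trivial] at hb
  exact ⟨b, fun v => by rw [← hb, hdiag], fun v w => by rw [hp, hb]⟩

end

namespace JordanWigner

variable {ι R : Type*} [LinearOrder ι] [CommRing R]

lemma neg_one_pow_val_add_one (b : ZMod 2) : (-1 : R) ^ (b + 1).val = -(-1) ^ b.val := by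
  fin_cases b
  · change (-1 : R) ^ 1 = -(-1) ^ 0; simp
  · change (-1 : R) ^ 0 = -(-1) ^ 1; simp

lemma add_single_add_single (i : ι) (x : ι → ZMod 2) :
    x + Pi.single i 1 + Pi.single i 1 = x := by
  rw [add_assoc, ← Pi.single_add, show (1 + 1 : ZMod 2) = 0 from rfl, Pi.single_zero, add_zero]

lemma add_single_ne (i : ι) (x : ι → ZMod 2) : x + Pi.single i 1 ≠ x := by
  simp

variable [Fintype ι]

def sign (i : ι) (x : ι → ZMod 2) : R := ∏ k ∈ univ.filter (· < i), (-1) ^ (x k).val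

lemma sign_mul_self (i : ι) (x : ι → ZMod 2) : sign i x * sign i x = (1 : R) := by
  rw [sign, ← prod_mul_distrib, ← prod_const_one]
  exact prod_congr rfl fun k _ => by rw [← pow_add, ← two_mul, pow_mul]; simp

lemma sign_add_single_of_not_lt {i j : ι} (h : ¬ j < i) (x : ι → ZMod 2) :
    sign i (x + Pi.single j 1) = (sign i x : R) := by
  refine prod_congr rfl fun k hk => ?_
  have : k ≠ j := by rintro rfl; exact h (mem_filter.1 hk).2
  simp [this]

lemma sign_add_single_of_lt {i j : ι} (h : j < i) (x : ι → ZMod 2) :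
    sign i (x + Pi.single j 1) = -(sign i x : R) := by
  have hj : j ∈ univ.filter (· < i) := by simpa using h
  rw [sign, sign, ← mul_prod_erase _ _ hj, ← mul_prod_erase _ _ hj,
    prod_congr rfl fun k hk => by
      rw [Pi.add_apply, Pi.single_eq_of_ne (ne_of_mem_erase hk), add_zero]]
  simp [neg_one_pow_val_add_one]

/- The Jordan–Wigner representation of the Clifford algebra on `ℂ^(ZMod 2)^ι`: `gen i` flips the
`i`-th bit and multiplies by `(-1)` to the number of set bits before `i`. These signs make the
generators anticommute; they are self-adjoint, square to `1`, and `gen i * gen j` has no diagonal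
entries for `i ≠ j`. -/
def gen (i : ι) : Matrix (ι → ZMod 2) (ι → ZMod 2) R :=
  of fun x y => if y = x + Pi.single i 1 then sign i x else 0

lemma gen_apply (i : ι) (x y : ι → ZMod 2) :
    gen i x y = if y = x + Pi.single i 1 then (sign i x : R) else 0 := rfl

lemma gen_mul_apply (i j : ι) (x y : ι → ZMod 2) :
    (gen i * gen j : Matrix _ _ R) x y = sign i x * gen j (x + Pi.single i 1) y := by
  rw [mul_apply, sum_eq_single (x + Pi.single i 1)
    (fun z _ hz => by rw [gen_apply, if_neg hz, zero_mul]) (fun h => absurd (mem_univ _) h),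
    gen_apply, if_pos rfl]

lemma gen_mul_self (i : ι) : (gen i * gen i : Matrix _ _ R) = 1 := by
  ext x y
  rw [gen_mul_apply, gen_apply, add_single_add_single, one_apply,
    sign_add_single_of_not_lt (lt_irrefl i)]
  split_ifs with h h' h' <;> simp_all [sign_mul_self, eq_comm]

lemma gen_mul_gen_of_ne {i j : ι} (h : i ≠ j) :
    (gen i * gen j : Matrix _ _ R) = -(gen j * gen i) := by
  ext x y
  rw [neg_apply, gen_mul_apply, gen_mul_apply, gen_apply, gen_apply, add_right_comm x]
  split_ifs
  · rcases h.lt_or_gt with hij | hji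
    · rw [sign_add_single_of_lt hij, sign_add_single_of_not_lt hij.not_gt]; ring
    · rw [sign_add_single_of_not_lt hji.not_gt, sign_add_single_of_lt hji]; ring
  · simp

lemma trace_gen (i : ι) : (gen i : Matrix _ _ R).trace = 0 :=
  sum_eq_zero fun x _ => by rw [diag_apply, gen_apply, if_neg (add_single_ne i x).symm]

lemma trace_gen_mul_gen (i j : ι) :
    (gen i * gen j : Matrix _ _ R).trace =
      if i = j then (Fintype.card (ι → ZMod 2) : R) else 0 := by
  split_ifs with h
  · rw [h, gen_mul_self, trace_one]
  refine sum_eq_zero fun x _ => ?_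
  rw [diag_apply, gen_mul_apply, gen_apply, if_neg, mul_zero]
  intro hx
  have := congrFun hx i
  simp [h] at this

lemma conjTranspose_gen [StarRing R] (i : ι) : (gen i : Matrix _ _ R)ᴴ = gen i := by
  ext x y
  have hxy : x = y + Pi.single i 1 ↔ y = x + Pi.single i 1 :=
    ⟨fun h => by rw [h, add_single_add_single], fun h => by rw [h, add_single_add_single]⟩
  rw [conjTranspose_apply, gen_apply, gen_apply]
  by_cases h : y = x + Pi.single i 1
  · rw [if_pos (hxy.2 h), if_pos h, h, sign_add_single_of_not_lt (lt_irrefl i)]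
    simp [sign]
  · rw [if_neg (mt hxy.1 h), if_neg h, star_zero]

def clifford (a : ι → R) : Matrix (ι → ZMod 2) (ι → ZMod 2) R := ∑ i, a i • gen i

lemma clifford_mul_clifford (a b : ι → R) :
    clifford a * clifford b = ∑ i, ∑ j, (a i * b j) • (gen i * gen j) := by
  simp only [clifford, sum_mul_sum, smul_mul_smul_comm]

lemma clifford_mul_self (a : ι → R) : clifford a * clifford a = (a ⬝ᵥ a) • 1 := by
  rw [clifford_mul_clifford, Fintype.sum_sum_eq_sum_of_add_eq_zero]
  · simp only [gen_mul_self, dotProduct, sum_smul]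
  · intro i j h
    rw [gen_mul_gen_of_ne h, mul_comm, smul_neg, neg_add_cancel]

lemma trace_clifford (a : ι → R) : (clifford a).trace = 0 := by
  simp [clifford, trace_sum, trace_gen]

lemma trace_clifford_mul_clifford (a b : ι → R) :
    (clifford a * clifford b).trace = (a ⬝ᵥ b) * Fintype.card (ι → ZMod 2) := by
  simp [clifford_mul_clifford, trace_sum, trace_gen_mul_gen, dotProduct, sum_mul]

lemma conjTranspose_clifford [StarRing R] {a : ι → R} (ha : star a = a) :
    (clifford a)ᴴ = clifford a := by
  simp only [clifford, conjTranspose_sum, conjTranspose_smul, conjTranspose_gen]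
  exact sum_congr rfl fun i _ => by rw [← Pi.star_apply, ha]

noncomputable def proj (b : ι → ℝ) : Matrix (ι → ZMod 2) (ι → ZMod 2) ℂ :=
  (2⁻¹ : ℂ) • (1 + clifford (Complex.ofReal ∘ b))

lemma isStarProjection_proj {b : ι → ℝ} (hb : b ⬝ᵥ b = 1) : IsStarProjection (proj b) :=
  isStarProjection_half_smul_one_add (conjTranspose_clifford (by ext; simp))
    (by rw [clifford_mul_self, ← Complex.ofReal_dotProduct, hb, Complex.ofReal_one, one_smul])

lemma trace_proj (b : ι → ℝ) : (proj b).trace = 2⁻¹ * Fintype.card (ι → ZMod 2) := by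
  simp [proj, trace_clifford]

lemma trace_proj_mul_proj (b c : ι → ℝ) :
    (proj b * proj c).trace = ((1 + b ⬝ᵥ c) / 4 : ℝ) * Fintype.card (ι → ZMod 2) := by
  simp only [proj, smul_mul_smul_comm, add_mul, mul_add, one_mul, mul_one, trace_smul, trace_add,
    trace_one, trace_clifford, trace_clifford_mul_clifford, ← Complex.ofReal_dotProduct,
    smul_eq_mul]
  push_cast
  ring

end JordanWigner

lemma exists_quantum_of_unit_vectors {κ ι : Type*} [Fintype ι] [LinearOrder ι] (b : κ → ι → ℝ)
    (hb : ∀ v, b v ⬝ᵥ b v = 1) :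
    ∃ d, 1 ≤ d ∧ ∃ (P : κ → Matrix (Fin d) (Fin d) ℂ) (ρ : Matrix (Fin d) (Fin d) ℂ),
      (∀ v, IsProjMat (P v)) ∧ ρ.PosSemidef ∧ ρ.trace = 1 ∧ (∀ v, ρ * P v = P v * ρ) ∧
      (∀ v, (ρ * P v).trace = ((1 / 2 : ℝ) : ℂ)) ∧
      ∀ v w, (ρ * P v * P w).trace = (((1 + b v ⬝ᵥ b w) / 4 : ℝ) : ℂ) := by
  have hD : (Fintype.card (ι → ZMod 2) : ℂ) ≠ 0 := Nat.cast_ne_zero.mpr Fintype.card_ne_zero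
  set e := Fintype.equivFin (ι → ZMod 2)
  have hproj v := JordanWigner.isStarProjection_proj (hb v)
  refine ⟨_, Fintype.card_pos, fun v => reindexAlgEquiv ℂ ℂ e (JordanWigner.proj (b v)),
    (Fintype.card (ι → ZMod 2) : ℂ)⁻¹ • 1, fun v => ⟨?_, ?_⟩,
    PosSemidef.one.smul (inv_nonneg.mpr (Nat.cast_nonneg _)), ?_,
    fun v => by simp only [smul_mul_assoc, mul_smul_comm, one_mul, mul_one], fun v => ?_,
    fun v w => ?_⟩
  · rw [IsHermitian, coe_reindexAlgEquiv, conjTranspose_reindex, ← star_eq_conjTranspose,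
      (hproj v).isSelfAdjoint.star_eq]
  · rw [← map_mul, (hproj v).isIdempotentElem.eq]
  · rw [trace_smul, trace_one, Fintype.card_fin, smul_eq_mul, inv_mul_cancel₀ hD]
  · rw [smul_mul_assoc, one_mul, trace_smul, coe_reindexAlgEquiv, trace_reindex,
      JordanWigner.trace_proj, smul_eq_mul]
    field_simp
    push_cast
    ring
  · rw [smul_mul_assoc, smul_mul_assoc, one_mul, trace_smul, ← map_mul, coe_reindexAlgEquiv,
      trace_reindex, JordanWigner.trace_proj_mul_proj, smul_eq_mul]
    field_simp

theorem stmt8_general {n : ℕ} (G : SimpleGraph (Fin n)) [DecidableRel G.Adj] :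
    fq G (1 / 2) = fvect G (1 / 2) := by
  unfold fq fvect
  congr 1
  ext s
  constructor
  · rintro ⟨d, -, P, ρ, hP, hρ, htr, hc, hmarg, hs⟩
    have hP' : ∀ v, IsStarProjection (P v) := fun v => ⟨(hP v).2, (hP v).1⟩
    refine ⟨quantumCorr ρ P, isVect_quantumCorr hP' hρ htr hc, isSync_quantumCorr hP',
      hasMarginals_quantumCorr hmarg, ?_⟩
    rw [fval_quantumCorr, ← hs, Complex.ofReal_re]
  · rintro ⟨p, hv, hs, hm, rfl⟩
    obtain ⟨b, hb, hp⟩ := hv.exists_unit_vectors hs hm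
    obtain ⟨d, hd, P, ρ, hP, hρ, htr, hc, hmarg, hval⟩ := exists_quantum_of_unit_vectors b hb
    refine ⟨d, hd, P, ρ, hP, hρ, htr, hc, hmarg, ?_⟩
    simp only [Fval, hval, hp, Complex.ofReal_sum]

theorem stmt8 {n : ℕ} (hn : 1 ≤ n) (G : SimpleGraph (Fin n)) [DecidableRel G.Adj] :
    fq G (1 / 2) = fvect G (1 / 2) :=
  stmt8_general G
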